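/- arXiv:2003.12975 — 8 statements merged into one kernel-verified Lean document; each statement's English description precedes it below -/
import Mathlib

section
/- Let μ > 0 and let x_i, x_{i-1}, a_i, a_{i-1}, d_{i,i}, d_{i-1,i-1}, d_{i-1,i} be vectors in ℝ² (Euclidean norm) with ‖d_{i,i}‖ ≤ μ, ‖d_{i-1,i-1}‖ ≤ μ, ‖d_{i-1,i}‖ ≤ μ. Define y_{i,i} = x_i + a_i + d_{i,i}, y_{i-1,i-1} = x_{i-1} + a_{i-1} + d_{i-1,i-1}, and y_{i-1,i} = x_i − x_{i-1} + d_{i-1,i}. If ‖y_{i-1,i} + y_{i-1,i-1} − y_{i,i}‖ > 3μ, then a_i ≠ 0 or a_{i-1} ≠ 0, i.e., at least one of the two vehicles is under attack. -/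
/-- Detector 1 correctness: if the consistency residual exceeds `3μ` in norm, then
at least one of the two neighboring vehicles is under attack. -/
theorem detector1_correct
    (μ : ℝ) (hμ : 0 < μ)
    (xi xim ai aim dii dimim dimi : EuclideanSpace ℝ (Fin 2))
    (hdii : ‖dii‖ ≤ μ) (hdimim : ‖dimim‖ ≤ μ) (hdimi : ‖dimi‖ ≤ μ)
    (yii yimim yimi : EuclideanSpace ℝ (Fin 2))
    (hyii : yii = xi + ai + dii)
    (hyimim : yimim = xim + aim + dimim)
    (hyimi : yimi = xi - xim + dimi)
    (hdet : ‖yimi + yimim - yii‖ > 3 * μ) :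
    ai ≠ 0 ∨ aim ≠ 0 := by
  by_contra h
  push_neg at h
  obtain ⟨h1, h2⟩ := h
  subst hyii hyimim hyimi h1 h2
  have : xi - xim + dimi + (xim + 0 + dimim) - (xi + 0 + dii) = dimi + dimim - dii := by
    abel
  rw [this] at hdet
  have : ‖dimi + dimim - dii‖ ≤ 3 * μ := by
    calc ‖dimi + dimim - dii‖ ≤ ‖dimi + dimim‖ + ‖dii‖ := norm_sub_le _ _
    _ ≤ ‖dimi‖ + ‖dimim‖ + ‖dii‖ := by linarith [norm_add_le dimi dimim]
    _ ≤ 3 * μ := by linarith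
  linarith
end

section
/- Let a ≥ 1, q > 0, ε > 0, μ > 0, and β ≥ 0 be real numbers. Define Q = (3/2)(ε + μ) + (√2/2)β and k* = min{1, β/(a·q + ε + μ)}. Define the sequence ρ : ℕ → ℝ by ρ(0) = q and ρ(t+1) = (1 − min{1, β/(a·ρ(t) + ε + μ)})·a·ρ(t) + Q. If (1 − k*)·a·q + Q < q, then ρ(t) < q for all t ≥ 1. -/
/-- Monotonicity of the map `u ↦ (1 - min 1 (β/(u+ε+μ)))·u` on `u ≥ 0`. -/
lemma rho_map_mono (ε μ β : ℝ) (hε : 0 < ε) (hμ : 0 < μ) (hβ : 0 ≤ β)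
    (u v : ℝ) (hu : 0 ≤ u) (huv : u ≤ v) :
    (1 - min 1 (β / (u + ε + μ))) * u ≤ (1 - min 1 (β / (v + ε + μ))) * v := by
  have hv : 0 ≤ v := hu.trans huv
  have hdu : 0 < u + ε + μ := by linarith
  have hdv : 0 < v + ε + μ := by linarith
  rcases le_or_gt β (u + ε + μ) with h1 | h1
  · have h2 : β ≤ v + ε + μ := by linarith
    rw [min_eq_right ((div_le_one hdu).mpr h1), min_eq_right ((div_le_one hdv).mpr h2)]
    have e1 : (1 - β / (u + ε + μ)) * u = u * (u + ε + μ - β) / (u + ε + μ) := by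
      field_simp
    have e2 : (1 - β / (v + ε + μ)) * v = v * (v + ε + μ - β) / (v + ε + μ) := by
      field_simp
    rw [e1, e2, div_le_div_iff₀ hdu hdv]
    nlinarith [mul_nonneg (sub_nonneg.mpr huv) (mul_nonneg (by linarith : (0:ℝ) ≤ ε + μ) (by linarith : (0:ℝ) ≤ v + ε + μ - β)),
      mul_nonneg (sub_nonneg.mpr huv) (mul_nonneg hu hv),
      mul_nonneg (sub_nonneg.mpr huv) (mul_nonneg (by linarith : (0:ℝ) ≤ ε + μ) hu)]
  · have : min 1 (β / (u + ε + μ)) = 1 :=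
      min_eq_left ((one_le_div hdu).mpr h1.le)
    rw [this]
    simp only [sub_self, zero_mul]
    exact mul_nonneg (by simpa using sub_nonneg.mpr (min_le_left 1 (β / (v + ε + μ)))) hv

/-- Key inductive claim in the proof of Theorem 1: under the condition
`(1 − k*)·a·q + Q < q`, the recursively defined error bound satisfies `ρ(t) < q`
for all `t ≥ 1`. -/
theorem rho_lt_q
    (a q ε μ β : ℝ) (ha : 1 ≤ a) (hq : 0 < q) (hε : 0 < ε) (hμ : 0 < μ) (hβ : 0 ≤ β)
    (Q kstar : ℝ)
    (hQ : Q = (3 / 2) * (ε + μ) + (Real.sqrt 2 / 2) * β)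
    (hk : kstar = min 1 (β / (a * q + ε + μ)))
    (ρ : ℕ → ℝ) (hρ0 : ρ 0 = q)
    (hρ : ∀ t, ρ (t + 1) = (1 - min 1 (β / (a * ρ t + ε + μ))) * (a * ρ t) + Q)
    (hcond : (1 - kstar) * (a * q) + Q < q) :
    ∀ t, 1 ≤ t → ρ t < q := by
  have hQpos : 0 < Q := by
    have h2 : 0 ≤ Real.sqrt 2 := Real.sqrt_nonneg 2
    have : 0 ≤ Real.sqrt 2 / 2 * β := mul_nonneg (by positivity) hβ
    rw [hQ]; nlinarith
  -- simultaneous invariant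
  have key : ∀ t, 0 ≤ ρ t ∧ ρ t ≤ q ∧ (1 ≤ t → ρ t < q) := by
    intro t
    induction t with
    | zero => exact ⟨by rw [hρ0]; exact hq.le, by rw [hρ0], by omega⟩
    | succ s ih =>
      obtain ⟨h0, h1, -⟩ := ih
      have hlt : ρ (s + 1) < q := by
        rw [hρ s]
        have hmono := rho_map_mono ε μ β hε hμ hβ (a * ρ s) (a * q)
          (mul_nonneg (by linarith) h0)
          (mul_le_mul_of_nonneg_left h1 (by linarith))
        calc (1 - min 1 (β / (a * ρ s + ε + μ))) * (a * ρ s) + Q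
            ≤ (1 - min 1 (β / (a * q + ε + μ))) * (a * q) + Q := by linarith
          _ = (1 - kstar) * (a * q) + Q := by rw [hk]
          _ < q := hcond
      have hnn : 0 ≤ ρ (s + 1) := by
        rw [hρ s]
        have : 0 ≤ (1 - min 1 (β / (a * ρ s + ε + μ))) * (a * ρ s) :=
          mul_nonneg (by simpa using sub_nonneg.mpr (min_le_left 1 _))
            (mul_nonneg (by linarith) h0)
        linarith
      exact ⟨hnn, hlt.le, fun _ => hlt⟩
  exact fun t ht => (key t).2.2 ht
end

section
/- Let a ≥ 1, q > 0, ε > 0, μ > 0, and β ≥ 0 be real numbers. Define Q = (3/2)(ε + μ) + (√2/2)β and k* = min{1, β/(a·q + ε + μ)}. Define the sequence ρ : ℕ → ℝ by ρ(0) = q and ρ(t+1) = (1 − min{1, β/(a·ρ(t) + ε + μ)})·a·ρ(t) + Q. Assume (1 − k*)·a·q + Q < q. Then limsup_{t→∞} ρ(t) ≤ α, where α = Q if k* = 1, and α = Q/(1 − (1 − k*)·a) if k* < 1 (in which case 0 < (1 − k*)·a < 1). -/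
open Filter

/-- Asymptotic bound of Theorem 1: `limsup ρ(t) ≤ α` where `α = Q` if `k* = 1`
and `α = Q/(1 − (1 − k*)·a)` if `k* < 1`, in which case `0 < (1 − k*)·a < 1`. -/
theorem rho_limsup_bound
    (a q ε μ β : ℝ) (ha : 1 ≤ a) (hq : 0 < q) (hε : 0 < ε) (hμ : 0 < μ) (hβ : 0 ≤ β)
    (Q kstar : ℝ)
    (hQ : Q = (3 / 2) * (ε + μ) + (Real.sqrt 2 / 2) * β)
    (hk : kstar = min 1 (β / (a * q + ε + μ)))
    (ρ : ℕ → ℝ) (hρ0 : ρ 0 = q)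
    (hρ : ∀ t, ρ (t + 1) = (1 - min 1 (β / (a * ρ t + ε + μ))) * (a * ρ t) + Q)
    (hcond : (1 - kstar) * (a * q) + Q < q)
    (α : ℝ) (hα : α = if kstar = 1 then Q else Q / (1 - (1 - kstar) * a)) :
    (kstar < 1 → 0 < (1 - kstar) * a ∧ (1 - kstar) * a < 1) ∧
      limsup ρ atTop ≤ α := by
  have ha0 : 0 < a := lt_of_lt_of_le one_pos ha
  have hQpos : 0 < Q := by
    have h2 : 0 ≤ Real.sqrt 2 / 2 := by positivity
    have : 0 ≤ Real.sqrt 2 / 2 * β := mul_nonneg h2 hβ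
    rw [hQ]; nlinarith
  have hdenq : 0 < a * q + ε + μ := by positivity
  have hk1 : kstar ≤ 1 := by rw [hk]; exact min_le_left _ _
  have hk0 : 0 ≤ kstar := by
    rw [hk]; exact le_min zero_le_one (div_nonneg hβ hdenq.le)
  by_cases hks : kstar = 1
  · -- saturated case: k* = 1, ρ(t+1) = Q eventually
    have hβge : a * q + ε + μ ≤ β := by
      have hmin1 : min 1 (β / (a * q + ε + μ)) = 1 := hk.symm.trans hks
      exact (one_le_div hdenq).mp (min_eq_left_iff.mp hmin1)
    have hQq : Q < q := by rw [hks] at hcond; linarith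
    have hinv : ∀ t, 0 < ρ t ∧ ρ t ≤ q ∧ (t ≠ 0 → ρ t = Q) := by
      intro t
      induction t with
      | zero => exact ⟨hρ0 ▸ hq, hρ0 ▸ le_refl q, fun h => absurd rfl h⟩
      | succ n ih =>
        obtain ⟨hpos, hle, -⟩ := ih
        have hden : 0 < a * ρ n + ε + μ := by positivity
        have hge1 : (1:ℝ) ≤ β / (a * ρ n + ε + μ) := by
          rw [one_le_div hden]
          have : a * ρ n ≤ a * q := mul_le_mul_of_nonneg_left hle ha0.le
          linarith
        have hmin : min 1 (β / (a * ρ n + ε + μ)) = 1 := min_eq_left hge1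
        have heq : ρ (n + 1) = Q := by rw [hρ n, hmin]; ring
        exact ⟨heq ▸ hQpos, heq ▸ hQq.le, fun _ => heq⟩
    have htend : Tendsto ρ atTop (nhds Q) := by
      have : ∀ᶠ t in atTop, ρ t = Q := by
        filter_upwards [eventually_ge_atTop 1] with t ht
        exact (hinv t).2.2 (by omega)
      exact Tendsto.congr' (EventuallyEq.symm this) tendsto_const_nhds
    refine ⟨fun h => absurd hks h.ne, ?_⟩
    rw [htend.limsup_eq, hα, if_pos hks]
  · -- unsaturated case
    have hkslt : kstar < 1 := lt_of_le_of_ne hk1 hks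
    set c := (1 - kstar) * a with hc
    have hc0 : 0 < c := mul_pos (by linarith) ha0
    have hc1 : c < 1 := by
      have : c * q + Q < q := by rw [hc]; linarith [hcond]
      nlinarith
    have hα' : α = Q / (1 - c) := by rw [hα, if_neg hks]
    have h1c : (0:ℝ) < 1 - c := by linarith
    have hne : (1:ℝ) - c ≠ 0 := by linarith
    have hαQ : (1 - c) * α = Q := by
      rw [hα', mul_comm, div_mul_cancel₀ _ hne]
    have hαc : c * α + Q = α := by linear_combination -hαQ
    have hqα : α < q := by
      rw [hα', div_lt_iff₀ (by linarith : (0:ℝ) < 1 - c)]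
      nlinarith
    -- invariant and recursion bound
    have hinv : ∀ t, 0 < ρ t ∧ ρ t ≤ q ∧ ρ (t + 1) ≤ c * ρ t + Q := by
      intro t
      induction t with
      | zero =>
        refine ⟨hρ0 ▸ hq, hρ0 ▸ le_refl q, ?_⟩
        rw [hρ 0, hρ0, ← hk, hc]
        nlinarith
      | succ n ih =>
        obtain ⟨hpos, hle, hrec⟩ := ih
        have hpos' : 0 < ρ (n + 1) := by
          rw [hρ n]
          have h1 : min 1 (β / (a * ρ n + ε + μ)) ≤ 1 := min_le_left _ _
          nlinarith [mul_pos ha0 hpos]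
        have hle' : ρ (n + 1) ≤ q := by
          have h1 : ρ (n + 1) ≤ c * q + Q := by nlinarith
          have h2 : c * q + Q < q := by rw [hc]; linarith [hcond]
          linarith
        refine ⟨hpos', hle', ?_⟩
        have hden : 0 < a * ρ (n+1) + ε + μ := by positivity
        have hkmono : kstar ≤ min 1 (β / (a * ρ (n+1) + ε + μ)) := by
          rw [hk]
          refine min_le_min le_rfl ?_
          apply div_le_div_of_nonneg_left hβ hden
          have : a * ρ (n+1) ≤ a * q := mul_le_mul_of_nonneg_left hle' ha0.le
          linarith
        rw [hρ (n+1)]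
        have h2 : (1 - min 1 (β / (a * ρ (n+1) + ε + μ))) * (a * ρ (n+1))
            ≤ (1 - kstar) * (a * ρ (n+1)) := by
          apply mul_le_mul_of_nonneg_right (by linarith) (by positivity)
        calc (1 - min 1 (β / (a * ρ (n+1) + ε + μ))) * (a * ρ (n+1)) + Q
            ≤ (1 - kstar) * (a * ρ (n+1)) + Q := by linarith
          _ = c * ρ (n+1) + Q := by rw [hc]; ring
    -- geometric bound
    have hgeo : ∀ t, ρ t ≤ α + c ^ t * (q - α) := by
      intro t
      induction t with
      | zero => rw [hρ0]; simp
      | succ n ih =>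
        have hrec := (hinv n).2.2
        calc ρ (n + 1) ≤ c * ρ n + Q := hrec
          _ ≤ c * (α + c ^ n * (q - α)) + Q := by nlinarith
          _ = α + c ^ (n+1) * (q - α) := by linear_combination hαc
    have htend : Tendsto (fun t => α + c ^ t * (q - α)) atTop (nhds α) := by
      have h1 : Tendsto (fun t : ℕ => c ^ t) atTop (nhds 0) :=
        tendsto_pow_atTop_nhds_zero_of_lt_one hc0.le hc1
      have := (tendsto_const_nhds (x := α) (f := atTop)).add
        (h1.mul_const (q - α))
      simpa using this
    refine ⟨fun _ => ⟨hc0, hc1⟩, ?_⟩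
    have hbdd : IsBoundedUnder (· ≤ ·) atTop (fun t => α + c ^ t * (q - α)) :=
      htend.isBoundedUnder_le
    have hcob : IsCoboundedUnder (· ≤ ·) atTop ρ := by
      apply IsBoundedUnder.isCoboundedUnder_le
      exact isBoundedUnder_of ⟨0, fun t => (hinv t).1.le⟩
    calc limsup ρ atTop ≤ limsup (fun t => α + c ^ t * (q - α)) atTop :=
          limsup_le_limsup (Eventually.of_forall hgeo) hcob hbdd
      _ = α := htend.limsup_eq
end

section
/- Let λ, T, g_s, g_v be positive real numbers with λ·g_v² < 4·g_s and T < g_v/g_s. Consider the complex 2×2 matrix Q with rows (1, T) and (−λ·T·g_s, 1 − λ·T·g_v). Then every eigenvalue s ∈ ℂ of Q satisfies |s| < 1 (i.e., Q is Schur stable). -/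
/-!
The characteristic polynomial of `Q` is `s² - t s + d` with `t = 2 - λTg_v` and
`d = 1 - λTg_v + λT²g_s`. Its discriminant `t² - 4d = λT²(λg_v² - 4g_s)` is negative, so the
eigenvalues are a pair of non-real complex conjugates and `|s|² = d`; finally
`d - 1 = λT(Tg_s - g_v) < 0`.
-/

theorem Matrix.mem_spectrum_fin_two_iff {K : Type*} [Field K] (A : Matrix (Fin 2) (Fin 2) K)
    (s : K) : s ∈ spectrum K A ↔ s ^ 2 - A.trace * s + A.det = 0 := by
  simp [Matrix.mem_spectrum_iff_isRoot_charpoly, Matrix.charpoly_fin_two]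

theorem Complex.sq_norm_eq_of_quadratic_eq_zero {t d : ℝ} (hdisc : t ^ 2 < 4 * d) {s : ℂ}
    (hs : s ^ 2 - t * s + d = 0) : ‖s‖ ^ 2 = d := by
  have hre : s.re ^ 2 - s.im ^ 2 - t * s.re + d = 0 := by
    simpa [sq] using congrArg Complex.re hs
  have him : s.im * (2 * s.re - t) = 0 := by
    have := congrArg Complex.im hs
    simp only [sq, Complex.add_im, Complex.sub_im, Complex.mul_im, Complex.ofReal_re,
      Complex.ofReal_im, Complex.zero_im] at this
    linear_combination this
  have hre_eq : 2 * s.re = t := by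
    rcases mul_eq_zero.mp him with hy | hx
    · -- a real root would force `(2x - t)² = t² - 4d < 0`
      nlinarith [sq_nonneg (2 * s.re - t)]
    · linarith [hx]
  rw [Complex.sq_norm, Complex.normSq_apply]
  linear_combination -hre + s.re * hre_eq

theorem Matrix.norm_lt_one_of_mem_spectrum_fin_two {A : Matrix (Fin 2) (Fin 2) ℂ} {t d : ℝ}
    (htrace : A.trace = t) (hdet : A.det = d) (hdisc : t ^ 2 < 4 * d) (hd : d < 1) {s : ℂ}
    (hs : s ∈ spectrum ℂ A) : ‖s‖ < 1 := by
  rw [Matrix.mem_spectrum_fin_two_iff, htrace, hdet] at hs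
  have hnorm := Complex.sq_norm_eq_of_quadratic_eq_zero hdisc hs
  nlinarith [norm_nonneg s]

theorem closed_loop_schur_stable_general
    (lam T gs gv : ℝ) (hlam : 0 < lam) (hT : 0 < T) (hgs : 0 < gs)
    (h1 : lam * gv ^ 2 < 4 * gs) (h2 : T < gv / gs)
    (Q : Matrix (Fin 2) (Fin 2) ℂ)
    (hQ : Q = !![1, (T : ℂ); -((lam : ℂ) * T * gs), 1 - (lam : ℂ) * T * gv]) :
    ∀ s ∈ spectrum ℂ Q, ‖s‖ < 1 := by
  have htrace : Q.trace = ((2 - lam * T * gv : ℝ) : ℂ) := by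
    rw [hQ, Matrix.trace_fin_two_of]; push_cast; ring
  have hdet : Q.det = ((1 - lam * T * gv + lam * T ^ 2 * gs : ℝ) : ℂ) := by
    rw [hQ, Matrix.det_fin_two_of]; push_cast; ring
  have hTgs : T * gs < gv := (lt_div_iff₀ hgs).mp h2
  have hlamT : 0 < lam * T := mul_pos hlam hT
  refine fun s => Matrix.norm_lt_one_of_mem_spectrum_fin_two htrace hdet ?_ ?_
  · nlinarith [mul_pos hlamT hT]
  · nlinarith

/-- Spectral claim of Theorem 2: under `λg_v² < 4g_s` and `T < g_v/g_s`, all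
eigenvalues of `Q = [[1, T], [−λTg_s, 1 − λTg_v]]` lie in the open unit disk. -/
theorem closed_loop_schur_stable
    (lam T gs gv : ℝ) (hlam : 0 < lam) (hT : 0 < T) (hgs : 0 < gs) (hgv : 0 < gv)
    (h1 : lam * gv ^ 2 < 4 * gs) (h2 : T < gv / gs)
    (Q : Matrix (Fin 2) (Fin 2) ℂ)
    (hQ : Q = !![1, (T : ℂ); -((lam : ℂ) * T * gs), 1 - (lam : ℂ) * T * gv]) :
    ∀ s ∈ spectrum ℂ Q, ‖s‖ < 1 :=
  closed_loop_schur_stable_general lam T gs gv hlam hT hgs h1 h2 Q hQ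
end

section
/- Let n ≥ 1, let F be an n×n real matrix, and let P be an n×n real symmetric positive definite matrix satisfying Fᵀ·P·F − P = −I_n. Let λ_max(P) denote the largest eigenvalue of P, set λ = 1 − 1/(2·λ_max(P)) and β = ‖P‖ + 2·‖P·F‖², where ‖·‖ is the operator norm induced by the Euclidean norm on ℝⁿ. Then for all vectors x, g ∈ ℝⁿ, (F·x + g)ᵀ·P·(F·x + g) ≤ λ·(xᵀ·P·x) + β·‖g‖². -/
/-! Expanding the quadratic form `V`, the Lyapunov equation turns `V(Fx)` into `V(x) - ‖x‖²`.
Young's inequality absorbs the cross term `2⟪g, PFx⟫` into half of `‖x‖²`, and the Rayleigh bound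
`V(x) ≤ λ_max ‖x‖²` converts the remaining `-‖x‖² / 2` into `-V(x) / (2 λ_max)`. -/

open Matrix ContinuousLinearMap
open scoped MatrixOrder RealInnerProductSpace

section DiscreteLyapunov

variable {E : Type*} [NormedAddCommGroup E] [InnerProductSpace ℝ E]

theorem ContinuousLinearMap.real_inner_apply_le (C : E →L[ℝ] E) (x y : E) :
    ⟪y, C x⟫ ≤ ‖C‖ * ‖x‖ * ‖y‖ :=
  calc ⟪y, C x⟫ ≤ ‖y‖ * ‖C x‖ := real_inner_le_norm y (C x)
    _ ≤ ‖y‖ * (‖C‖ * ‖x‖) := by gcongr; exact C.le_opNorm x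
    _ = ‖C‖ * ‖x‖ * ‖y‖ := by ring

variable [CompleteSpace E] {A B : E →L[ℝ] E}

theorem IsSelfAdjoint.real_inner_add_apply_add (hA : IsSelfAdjoint A) (y g : E) :
    ⟪y + g, A (y + g)⟫ = ⟪y, A y⟫ + 2 * ⟪g, A y⟫ + ⟪g, A g⟫ := by
  have hsymm : ⟪y, A g⟫ = ⟪g, A y⟫ := (real_inner_comm _ _).trans (hA.isSymmetric g y)
  rw [map_add, inner_add_left, inner_add_right, inner_add_right, hsymm]
  ring

theorem real_inner_apply_apply_of_star_mul_mul_eq (hLyap : star B * A * B = A - 1) (x : E) :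
    ⟪B x, A (B x)⟫ = ⟪x, A x⟫ - ‖x‖ ^ 2 := by
  rw [← adjoint_inner_right, ← star_eq_adjoint]
  change ⟪x, (star B * A * B) x⟫ = _
  rw [hLyap, _root_.sub_apply, one_apply_eq_self, inner_sub_right, real_inner_self_eq_norm_sq]

theorem real_inner_apply_add_le_of_star_mul_mul_eq (hA : IsSelfAdjoint A)
    (hLyap : star B * A * B = A - 1) (x g : E) :
    ⟪B x + g, A (B x + g)⟫ ≤ ⟪x, A x⟫ - ‖x‖ ^ 2 / 2 + (‖A‖ + 2 * ‖A * B‖ ^ 2) * ‖g‖ ^ 2 := by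
  have hcross : ⟪g, A (B x)⟫ ≤ ‖A * B‖ * ‖x‖ * ‖g‖ := (A * B).real_inner_apply_le x g
  have hquad : ⟪g, A g⟫ ≤ ‖A‖ * ‖g‖ * ‖g‖ := A.real_inner_apply_le g g
  rw [IsSelfAdjoint.real_inner_add_apply_add hA, real_inner_apply_apply_of_star_mul_mul_eq hLyap]
  nlinarith [sq_nonneg (‖x‖ - 2 * ‖A * B‖ * ‖g‖)]

end DiscreteLyapunov

theorem Matrix.PosDef.pos_of_mem_spectrum {n : Type*} [Fintype n] [DecidableEq n]
    {M : Matrix n n ℝ} (hM : M.PosDef) {μ : ℝ} (hμ : μ ∈ spectrum ℝ M) : 0 < μ := by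
  rw [hM.isHermitian.spectrum_real_eq_range_eigenvalues] at hμ
  obtain ⟨i, rfl⟩ := hμ
  exact hM.eigenvalues_pos i

theorem Matrix.IsHermitian.real_inner_toEuclideanCLM_le {n : Type*} [Fintype n] [DecidableEq n]
    {M : Matrix n n ℝ} (hM : M.IsHermitian) {r : ℝ} (hr : ∀ μ ∈ spectrum ℝ M, μ ≤ r)
    (x : EuclideanSpace ℝ n) : ⟪x, toEuclideanCLM (𝕜 := ℝ) M x⟫ ≤ r * ‖x‖ ^ 2 := by
  have hle : (algebraMap ℝ (Matrix n n ℝ) r - M).PosSemidef :=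
    le_algebraMap_of_spectrum_le hr hM
  have hnonneg := hle.dotProduct_mulVec_nonneg (WithLp.ofLp x)
  rw [← real_inner_self_eq_norm_sq, inner_toEuclideanCLM, EuclideanSpace.inner_eq_star_dotProduct]
  simp only [star_trivial, Algebra.algebraMap_eq_smul_one, sub_mulVec, smul_mulVec, one_mulVec,
    dotProduct_sub, dotProduct_smul, smul_eq_mul, sub_nonneg] at hnonneg ⊢
  exact hnonneg

theorem lyapunov_one_step_general
    (n : ℕ)
    (F P : Matrix (Fin n) (Fin n) ℝ)
    (hPpd : P.PosDef)
    (hLyap : Fᵀ * P * F - P = -(1 : Matrix (Fin n) (Fin n) ℝ))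
    (lamMax lam beta : ℝ)
    (hlamMax : IsGreatest (spectrum ℝ P) lamMax)
    (hlam : lam = 1 - 1 / (2 * lamMax))
    (hbeta : beta = ‖Matrix.toEuclideanCLM (𝕜 := ℝ) P‖ +
      2 * ‖Matrix.toEuclideanCLM (𝕜 := ℝ) (P * F)‖ ^ 2) :
    ∀ x g : EuclideanSpace ℝ (Fin n),
      (inner ℝ (Matrix.toEuclideanCLM (𝕜 := ℝ) F x + g)
          (Matrix.toEuclideanCLM (𝕜 := ℝ) P (Matrix.toEuclideanCLM (𝕜 := ℝ) F x + g)) : ℝ) ≤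
        lam * (inner ℝ x (Matrix.toEuclideanCLM (𝕜 := ℝ) P x) : ℝ) + beta * ‖g‖ ^ 2 := by
  intro x g
  have hA : IsSelfAdjoint (toEuclideanCLM (𝕜 := ℝ) P) :=
    hPpd.isHermitian.isSelfAdjoint.map _
  have hStar : star (toEuclideanCLM (𝕜 := ℝ) F) * toEuclideanCLM (𝕜 := ℝ) P *
      toEuclideanCLM (𝕜 := ℝ) F = toEuclideanCLM (𝕜 := ℝ) P - 1 := by
    have hLyap' : star F * P * F = P - 1 := by
      rw [star_eq_conjTranspose, conjTranspose_eq_transpose_of_trivial]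
      linear_combination (norm := abel) hLyap
    simpa only [map_mul, map_sub, map_one, map_star] using congr(toEuclideanCLM (𝕜 := ℝ) $hLyap')
  have hstep := real_inner_apply_add_le_of_star_mul_mul_eq hA hStar x g
  have hray := hPpd.isHermitian.real_inner_toEuclideanCLM_le hlamMax.2 x
  have hpos : 0 < lamMax := hPpd.pos_of_mem_spectrum hlamMax.1
  have hdiv : ⟪x, toEuclideanCLM (𝕜 := ℝ) P x⟫ / (2 * lamMax) ≤ ‖x‖ ^ 2 / 2 := by
    rw [div_le_iff₀ (by positivity)]; linarith
  rw [← map_mul] at hstep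
  rw [hlam, hbeta, sub_mul, one_div, inv_mul_eq_div]
  linarith

/-- One-step Lyapunov decrease inequality (proof of Lemma 3): with `V(x) = xᵀPx`,
`FᵀPF − P = −I`, `λ = 1 − 1/(2λ_max(P))`, `β = ‖P‖ + 2‖PF‖²` (Euclidean operator
norms), one has `V(Fx + g) ≤ λ V(x) + β‖g‖²`. -/
theorem lyapunov_one_step
    (n : ℕ) (hn : 1 ≤ n)
    (F P : Matrix (Fin n) (Fin n) ℝ)
    (hPsymm : P.IsSymm) (hPpd : P.PosDef)
    (hLyap : Fᵀ * P * F - P = -(1 : Matrix (Fin n) (Fin n) ℝ))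
    (lamMax lam beta : ℝ)
    (hlamMax : IsGreatest (spectrum ℝ P) lamMax)
    (hlam : lam = 1 - 1 / (2 * lamMax))
    (hbeta : beta = ‖Matrix.toEuclideanCLM (𝕜 := ℝ) P‖ +
      2 * ‖Matrix.toEuclideanCLM (𝕜 := ℝ) (P * F)‖ ^ 2) :
    ∀ x g : EuclideanSpace ℝ (Fin n),
      (inner ℝ (Matrix.toEuclideanCLM (𝕜 := ℝ) F x + g)
          (Matrix.toEuclideanCLM (𝕜 := ℝ) P (Matrix.toEuclideanCLM (𝕜 := ℝ) F x + g)) : ℝ) ≤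
        lam * (inner ℝ x (Matrix.toEuclideanCLM (𝕜 := ℝ) P x) : ℝ) + beta * ‖g‖ ^ 2 :=
  lyapunov_one_step_general n F P hPpd hLyap lamMax lam beta hlamMax hlam hbeta
end

section
/- Let n ≥ 1, let F be an n×n real matrix, and let P be an n×n real symmetric positive definite matrix satisfying Fᵀ·P·F − P = −I_n. Let λ_min(P) and λ_max(P) denote the smallest and largest eigenvalues of P, set λ = 1 − 1/(2·λ_max(P)) and β = ‖P‖ + 2·‖P·F‖², where ‖·‖ is the operator norm induced by the Euclidean norm on ℝⁿ. Let x, G : ℕ → ℝⁿ be sequences with x(t+1) = F·x(t) + G(t) for all t. Then for every t ∈ ℕ, ‖x(t)‖² ≤ λᵗ·λ_max(P)·‖x(0)‖²/λ_min(P) + (β/λ_min(P))·Σ_{l=0}^{t−1} λ^{t−1−l}·‖G(l)‖². -/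
/-!
For `V x = ⟪P x, x⟫` the Lyapunov equation reads `V (F x) = V x - ‖x‖²`, and
`‖x‖² ≥ V x / λ_max(P)`. Along `x (t+1) = F x t + G t` the cross term `2 ⟪P F x, G⟫` is absorbed
by AM-GM at the cost of half of the decrease `‖x‖²`, so `V (x (t+1)) ≤ λ V (x t) + β ‖G t‖²`.
A discrete Grönwall iteration bounds `V (x t)`, and `λ_min(P) ‖x‖² ≤ V x ≤ λ_max(P) ‖x‖²`
converts back to `‖x t‖²`; the Lyapunov equation also forces `λ_min(P) ≥ 1`, so `λ ≥ 0`.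
-/

open Finset

theorem discrete_gronwall_const {R : Type*} [CommSemiring R] [PartialOrder R] [IsOrderedRing R]
    {u b : ℕ → R} {c : R} (hc : 0 ≤ c) (hu : ∀ n, u (n + 1) ≤ c * u n + b n) (n : ℕ) :
    u n ≤ c ^ n * u 0 + ∑ k ∈ range n, c ^ (n - 1 - k) * b k := by
  have h := discrete_gronwall_prod_general (n₀ := 0) (c := fun _ ↦ c) (fun n _ ↦ hu n)
    (fun _ _ ↦ hc) (Nat.zero_le n)
  simp only [prod_const, Nat.card_Ico, ← range_eq_Ico, card_range] at h
  convert h using 2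
  · ring
  · refine sum_congr rfl fun k _ ↦ ?_
    rw [mul_comm, Nat.sub_sub, add_comm 1 k]

variable {E : Type*} [NormedAddCommGroup E] [InnerProductSpace ℝ E]

local notation "⟪" x ", " y "⟫" => inner ℝ x y

namespace ContinuousLinearMap

theorem inner_apply_self_le_opNorm_mul (T : E →L[ℝ] E) (v : E) : ⟪T v, v⟫ ≤ ‖T‖ * ‖v‖ ^ 2 :=
  calc ⟪T v, v⟫ ≤ ‖T v‖ * ‖v‖ := real_inner_le_norm _ _
    _ ≤ ‖T‖ * ‖v‖ * ‖v‖ := by gcongr; exact T.le_opNorm v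
    _ = ‖T‖ * ‖v‖ ^ 2 := by ring

theorem mem_lowerBounds_spectrum_of_mul_norm_sq_le_inner [FiniteDimensional ℝ E]
    {T : E →L[ℝ] E} {c : ℝ} (hT : ∀ v, c * ‖v‖ ^ 2 ≤ ⟪T v, v⟫) :
    c ∈ lowerBounds (spectrum ℝ T) := by
  intro μ hμ
  rw [spectrum_eq, ← Module.End.hasEigenvalue_iff_mem_spectrum] at hμ
  obtain ⟨v, hv⟩ := hμ.exists_hasEigenvector
  have hTv : ⟪T v, v⟫ = μ * ‖v‖ ^ 2 := by
    rw [show T v = μ • v from hv.apply_eq_smul, real_inner_smul_left, real_inner_self_eq_norm_sq]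
  have : 0 < ‖v‖ ^ 2 := by have := hv.2; positivity
  nlinarith [hT v]

end ContinuousLinearMap

namespace IsSelfAdjoint

variable [FiniteDimensional ℝ E] {T : E →L[ℝ] E}

theorem inner_apply_self_le_of_mem_upperBounds_spectrum (hT : IsSelfAdjoint T) {c : ℝ}
    (hc : c ∈ upperBounds (spectrum ℝ T)) (v : E) : ⟪T v, v⟫ ≤ c * ‖v‖ ^ 2 := by
  rcases eq_or_ne v 0 with rfl | hv
  · simp
  have : Nontrivial E := ⟨⟨v, 0, hv⟩⟩
  have hsup := hc (by
    rw [ContinuousLinearMap.spectrum_eq]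
    exact hT.isSymmetric.hasEigenvalue_iSup_of_finiteDimensional.mem_spectrum)
  have hbdd : BddAbove (Set.range fun x : {x : E // x ≠ 0} ↦ T.rayleighQuotient x) :=
    ⟨‖T‖, by rintro _ ⟨x, rfl⟩; exact (le_abs_self _).trans (T.rayleighQuotient_le_norm x)⟩
  have hv' := (le_ciSup hbdd ⟨v, hv⟩).trans hsup
  rwa [ContinuousLinearMap.rayleighQuotient, ContinuousLinearMap.reApplyInnerSelf_apply,
    RCLike.re_to_real, div_le_iff₀ (by positivity)] at hv'

theorem le_inner_apply_self_of_mem_lowerBounds_spectrum (hT : IsSelfAdjoint T) {c : ℝ}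
    (hc : c ∈ lowerBounds (spectrum ℝ T)) (v : E) : c * ‖v‖ ^ 2 ≤ ⟪T v, v⟫ := by
  have hneg : -c ∈ upperBounds (spectrum ℝ (-T)) := fun μ hμ ↦ by
    rw [← spectrum.neg_eq, Set.mem_neg] at hμ
    linarith [hc hμ]
  have := hT.neg.inner_apply_self_le_of_mem_upperBounds_spectrum hneg v
  rw [neg_apply, inner_neg_left] at this
  linarith

end IsSelfAdjoint

namespace ContinuousLinearMap

variable [CompleteSpace E] {P F : E →L[ℝ] E}

theorem inner_apply_map_self_of_lyapunov (hL : star F * P * F - P = -1) (v : E) :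
    ⟪P (F v), F v⟫ = ⟪P v, v⟫ - ‖v‖ ^ 2 := by
  rw [sub_eq_iff_eq_add] at hL
  calc ⟪P (F v), F v⟫ = ⟪(star F * P * F) v, v⟫ := by
        rw [star_eq_adjoint, mul_apply_eq_comp, mul_apply_eq_comp, adjoint_inner_left]
    _ = ⟪P v, v⟫ - ‖v‖ ^ 2 := by
        rw [hL, add_apply, neg_apply, one_apply_eq_self, inner_add_left, inner_neg_left,
          real_inner_self_eq_norm_sq]
        ring

theorem norm_sq_le_inner_apply_self_of_lyapunov (hP : P.IsPositive)
    (hL : star F * P * F - P = -1) (v : E) : ‖v‖ ^ 2 ≤ ⟪P v, v⟫ := by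
  have := hP.re_inner_nonneg_left (F v)
  rw [RCLike.re_to_real, inner_apply_map_self_of_lyapunov hL] at this
  linarith

theorem inner_apply_add_self_of_lyapunov (hP : IsSelfAdjoint P) (hL : star F * P * F - P = -1)
    (x g : E) : ⟪P (F x + g), F x + g⟫
      = ⟪P x, x⟫ - ‖x‖ ^ 2 + 2 * ⟪(P * F) x, g⟫ + ⟪P g, g⟫ := by
  have hcross : ⟪P g, F x⟫ = ⟪P (F x), g⟫ := by
    rw [real_inner_comm]
    exact (hP.isSymmetric (F x) g).symm
  rw [map_add, inner_add_left, inner_add_right, inner_add_right,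
    inner_apply_map_self_of_lyapunov hL, hcross, mul_apply_eq_comp]
  ring

theorem inner_apply_add_self_le_of_lyapunov (hP : IsSelfAdjoint P)
    (hL : star F * P * F - P = -1) {c : ℝ} (hc : 0 < c) {x : E} (hx : ⟪P x, x⟫ ≤ c * ‖x‖ ^ 2)
    (g : E) : ⟪P (F x + g), F x + g⟫
      ≤ (1 - 1 / (2 * c)) * ⟪P x, x⟫ + (‖P‖ + 2 * ‖P * F‖ ^ 2) * ‖g‖ ^ 2 := by
  have hdecay : ⟪P x, x⟫ / (2 * c) ≤ ‖x‖ ^ 2 / 2 := by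
    rw [div_le_div_iff₀ (by positivity) two_pos]
    nlinarith
  have hcross : 2 * ⟪(P * F) x, g⟫ ≤ ‖x‖ ^ 2 / 2 + 2 * ‖P * F‖ ^ 2 * ‖g‖ ^ 2 := by
    have h := real_inner_le_norm ((P * F) x) g
    have h' := (P * F).le_opNorm x
    nlinarith [sq_nonneg (‖x‖ - 2 * ‖P * F‖ * ‖g‖), norm_nonneg g]
  have hsplit : (1 - 1 / (2 * c)) * ⟪P x, x⟫ = ⟪P x, x⟫ - ⟪P x, x⟫ / (2 * c) := by ring
  rw [inner_apply_add_self_of_lyapunov hP hL, hsplit]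
  linarith [inner_apply_self_le_opNorm_mul P g]

end ContinuousLinearMap

open Matrix

theorem trajectory_norm_bound_general
    (n : ℕ)
    (F P : Matrix (Fin n) (Fin n) ℝ)
    (hPpd : P.PosDef)
    (hLyap : Fᵀ * P * F - P = -(1 : Matrix (Fin n) (Fin n) ℝ))
    (lamMin lamMax lam beta : ℝ)
    (hlamMin : IsLeast (spectrum ℝ P) lamMin)
    (hlamMax : IsGreatest (spectrum ℝ P) lamMax)
    (hlam : lam = 1 - 1 / (2 * lamMax))
    (hbeta : beta = ‖Matrix.toEuclideanCLM (𝕜 := ℝ) P‖ +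
      2 * ‖Matrix.toEuclideanCLM (𝕜 := ℝ) (P * F)‖ ^ 2)
    (x G : ℕ → EuclideanSpace ℝ (Fin n))
    (hx : ∀ t, x (t + 1) = Matrix.toEuclideanCLM (𝕜 := ℝ) F (x t) + G t) :
    ∀ t, ‖x t‖ ^ 2 ≤ lam ^ t * lamMax * ‖x 0‖ ^ 2 / lamMin +
      (beta / lamMin) * ∑ l ∈ Finset.range t, lam ^ (t - 1 - l) * ‖G l‖ ^ 2 := by
  set P' := toEuclideanCLM (𝕜 := ℝ) P
  set F' := toEuclideanCLM (𝕜 := ℝ) F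
  have hP : P'.IsPositive := by
    rw [← ContinuousLinearMap.isPositive_toLinearMap_iff, coe_toEuclideanCLM_eq_toEuclideanLin]
    exact isPositive_toEuclideanLin_iff.mpr hPpd.posSemidef
  have hL : star F' * P' * F' - P' = -1 := by
    simpa [F', P', ← map_star, star_eq_conjTranspose] using
      congrArg (fun A ↦ toEuclideanCLM (𝕜 := ℝ) A) hLyap
  rw [← AlgEquiv.spectrum_eq (toEuclideanCLM (𝕜 := ℝ) (n := Fin n)) P] at hlamMin hlamMax
  have hlower := hP.isSelfAdjoint.le_inner_apply_self_of_mem_lowerBounds_spectrum hlamMin.2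
  have hupper := hP.isSelfAdjoint.inner_apply_self_le_of_mem_upperBounds_spectrum hlamMax.2
  have hlamMin_one : 1 ≤ lamMin :=
    ContinuousLinearMap.mem_lowerBounds_spectrum_of_mul_norm_sq_le_inner
      (by simpa using ContinuousLinearMap.norm_sq_le_inner_apply_self_of_lyapunov hP hL) hlamMin.1
  have hlamMin_le_lamMax := hlamMax.2 hlamMin.1
  have hlam_nonneg : 0 ≤ lam := by
    rw [hlam, sub_nonneg, div_le_one (by linarith)]
    linarith
  set V := fun t ↦ ⟪P' (x t), x t⟫
  have hstep (t : ℕ) : V (t + 1) ≤ lam * V t + beta * ‖G t‖ ^ 2 := by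
    simpa [V, hx t, hlam, hbeta] using ContinuousLinearMap.inner_apply_add_self_le_of_lyapunov
      hP.isSelfAdjoint hL (by linarith) (hupper (x t)) (G t)
  intro t
  have hV := discrete_gronwall_const hlam_nonneg hstep t
  have hV0 := mul_le_mul_of_nonneg_left (hupper (x 0)) (pow_nonneg hlam_nonneg t)
  simp only [mul_left_comm _ beta, ← Finset.mul_sum] at hV
  rw [div_mul_eq_mul_div, ← add_div, le_div_iff₀ (by linarith)]
  linarith [hlower (x t)]

/-- Trajectory bound (inequality (26) of Lemma 3): for `x(t+1) = F x(t) + G(t)` with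
`FᵀPF − P = −I`, `λ = 1 − 1/(2λ_max(P))`, `β = ‖P‖ + 2‖PF‖²`,
`‖x(t)‖² ≤ λᵗ λ_max(P) ‖x(0)‖²/λ_min(P) + (β/λ_min(P)) Σ_{l<t} λ^{t−1−l} ‖G(l)‖²`. -/
theorem trajectory_norm_bound
    (n : ℕ) (hn : 1 ≤ n)
    (F P : Matrix (Fin n) (Fin n) ℝ)
    (hPsymm : P.IsSymm) (hPpd : P.PosDef)
    (hLyap : Fᵀ * P * F - P = -(1 : Matrix (Fin n) (Fin n) ℝ))
    (lamMin lamMax lam beta : ℝ)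
    (hlamMin : IsLeast (spectrum ℝ P) lamMin)
    (hlamMax : IsGreatest (spectrum ℝ P) lamMax)
    (hlam : lam = 1 - 1 / (2 * lamMax))
    (hbeta : beta = ‖Matrix.toEuclideanCLM (𝕜 := ℝ) P‖ +
      2 * ‖Matrix.toEuclideanCLM (𝕜 := ℝ) (P * F)‖ ^ 2)
    (x G : ℕ → EuclideanSpace ℝ (Fin n))
    (hx : ∀ t, x (t + 1) = Matrix.toEuclideanCLM (𝕜 := ℝ) F (x t) + G t) :
    ∀ t, ‖x t‖ ^ 2 ≤ lam ^ t * lamMax * ‖x 0‖ ^ 2 / lamMin +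
      (beta / lamMin) * ∑ l ∈ Finset.range t, lam ^ (t - 1 - l) * ‖G l‖ ^ 2 :=
  trajectory_norm_bound_general n F P hPpd hLyap lamMin lamMax lam beta hlamMin hlamMax hlam hbeta x
    G hx
end

section
/- Let n ≥ 1, let F be an n×n real matrix, and let P be an n×n real symmetric positive definite matrix satisfying Fᵀ·P·F − P = −I_n. Let λ_min(P) and λ_max(P) denote the smallest and largest eigenvalues of P, set λ = 1 − 1/(2·λ_max(P)) and β = ‖P‖ + 2·‖P·F‖², where ‖·‖ is the operator norm induced by the Euclidean norm on ℝⁿ. Let x, G : ℕ → ℝⁿ satisfy x(t+1) = F·x(t) + G(t) for all t, and suppose there is α₁ ≥ 0 with ‖G(t)‖ ≤ α₁ for all t. Then limsup_{t→∞} ‖x(t)‖² ≤ β·α₁²/(λ_min(P)·(1 − λ)). -/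
/-!
Along the trajectory, `V t = ⟪x t, P x t⟫` is a Lyapunov function: the Lyapunov equation turns
`V (t + 1)` into `V t - ‖x t‖² + 2 ⟪P F x t, G t⟫ + ⟪G t, P G t⟫`, and AM-GM on the cross term
together with `V t ≤ λ_max(P) ‖x t‖²` gives `V (t + 1) ≤ λ V t + β α₁²`. Iterating,
`λ_min(P) ‖x t‖² ≤ V t ≤ λ ^ t V 0 + β α₁² / (1 - λ)`, and the first term dies out because
`P - I = FᵀPF` is positive semidefinite, so the spectrum of `P` lies in `[1, ∞)` and `0 ≤ λ < 1`.
-/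

open Matrix Filter
open scoped RealInnerProductSpace MatrixOrder Topology

theorem le_geom_add_of_le_mul_add {u : ℕ → ℝ} {r c : ℝ} (hr0 : 0 ≤ r) (hr1 : r ≠ 1)
    (hu : ∀ t, u (t + 1) ≤ r * u t + c) (t : ℕ) :
    u t ≤ r ^ t * (u 0 - c / (1 - r)) + c / (1 - r) := by
  have hfix : r * (c / (1 - r)) + c = c / (1 - r) := by
    field_simp [sub_ne_zero.2 hr1.symm]
    ring
  induction t with
  | zero => simp
  | succ t ih =>
    calc u (t + 1) ≤ r * u t + c := hu t
      _ ≤ r * (r ^ t * (u 0 - c / (1 - r)) + c / (1 - r)) + c := by gcongr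
      _ = r ^ (t + 1) * (u 0 - c / (1 - r)) + c / (1 - r) := by linear_combination hfix

theorem limsup_le_of_mul_le_of_le_mul_add {f u : ℕ → ℝ} {a r c : ℝ} (ha : 0 < a) (hr0 : 0 ≤ r)
    (hr1 : r < 1) (hf : ∀ t, 0 ≤ f t) (hfu : ∀ t, a * f t ≤ u t)
    (hu : ∀ t, u (t + 1) ≤ r * u t + c) :
    limsup f atTop ≤ c / (a * (1 - r)) := by
  set K := c / (1 - r)
  have hbound (t : ℕ) : f t ≤ (r ^ t * (u 0 - K) + K) / a := by
    rw [le_div_iff₀' ha]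
    exact (hfu t).trans (le_geom_add_of_le_mul_add hr0 hr1.ne hu t)
  have hlim : Tendsto (fun t ↦ (r ^ t * (u 0 - K) + K) / a) atTop (𝓝 (K / a)) := by
    simpa using (((tendsto_pow_atTop_nhds_zero_of_lt_one hr0 hr1).mul_const (u 0 - K)).add_const
      K).div_const a
  calc limsup f atTop ≤ limsup (fun t ↦ (r ^ t * (u 0 - K) + K) / a) atTop :=
        limsup_le_limsup (.of_forall hbound) (isCoboundedUnder_le_of_le atTop hf)
          hlim.isBoundedUnder_le
    _ = c / (a * (1 - r)) := by rw [hlim.limsup_eq, div_div, mul_comm]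

section InnerProductSpace

variable {E : Type*} [NormedAddCommGroup E] [InnerProductSpace ℝ E]

theorem inner_add_apply_add_le_of_lyapunov {T A : E →L[ℝ] E} (hT : (T : E →ₗ[ℝ] E).IsSymmetric)
    (hLyap : ∀ v, ⟪A v, T (A v)⟫ = ⟪v, T v⟫ - ‖v‖ ^ 2) (v g : E) :
    ⟪A v + g, T (A v + g)⟫ ≤ ⟪v, T v⟫ - ‖v‖ ^ 2 / 2 + (‖T‖ + 2 * ‖T * A‖ ^ 2) * ‖g‖ ^ 2 := by
  have hexpand : ⟪A v + g, T (A v + g)⟫ = ⟪A v, T (A v)⟫ + 2 * ⟪(T * A) v, g⟫ + ⟪g, T g⟫ := by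
    have hcross : ⟪A v, T g⟫ = ⟪(T * A) v, g⟫ := (hT (A v) g).symm
    simp only [map_add, inner_add_left, inner_add_right, hcross,
      real_inner_comm (T (A v)) g, mul_apply_eq_comp]
    ring
  have hcross : ⟪(T * A) v, g⟫ ≤ ‖T * A‖ * ‖v‖ * ‖g‖ :=
    (real_inner_le_norm _ _).trans (by gcongr; exact (T * A).le_opNorm v)
  have hquad : ⟪g, T g⟫ ≤ ‖T‖ * ‖g‖ ^ 2 :=
    calc ⟪g, T g⟫ ≤ ‖g‖ * (‖T‖ * ‖g‖) :=
          (real_inner_le_norm _ _).trans (by gcongr; exact T.le_opNorm g)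
      _ = ‖T‖ * ‖g‖ ^ 2 := by ring
  have hamgm : 2 * (‖T * A‖ * ‖v‖ * ‖g‖) ≤ ‖v‖ ^ 2 / 2 + 2 * ‖T * A‖ ^ 2 * ‖g‖ ^ 2 := by
    nlinarith [sq_nonneg (‖v‖ - 2 * ‖T * A‖ * ‖g‖)]
  rw [hexpand, hLyap]
  linarith

end InnerProductSpace

section Matrix

variable {ι : Type*} [Fintype ι] [DecidableEq ι]

theorem one_le_of_mem_spectrum_of_lyapunov {F P : Matrix ι ι ℝ} (hP : P.PosSemidef)
    (hLyap : Fᵀ * P * F - P = -1) : ∀ μ ∈ spectrum ℝ P, 1 ≤ μ := by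
  refine (algebraMap_le_iff_le_spectrum (r := (1 : ℝ)) hP.isHermitian.isSelfAdjoint).1 ?_
  rw [map_one, Matrix.le_iff, ← neg_neg (1 : Matrix ι ι ℝ), ← hLyap, sub_neg_eq_add,
    add_sub_cancel]
  simpa using hP.conjTranspose_mul_mul_same F

theorem mul_norm_sq_le_inner_toEuclideanCLM {P : Matrix ι ι ℝ} (hP : P.IsHermitian) {a : ℝ}
    (ha : ∀ μ ∈ spectrum ℝ P, a ≤ μ) (v : EuclideanSpace ℝ ι) :
    a * ‖v‖ ^ 2 ≤ ⟪v, toEuclideanCLM (𝕜 := ℝ) P v⟫ := by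
  have hle : (P - algebraMap ℝ _ a).PosSemidef :=
    (algebraMap_le_iff_le_spectrum hP.isSelfAdjoint).2 ha
  simpa [← coe_toEuclideanCLM_eq_toEuclideanLin, inner_sub_right, real_inner_smul_right,
    Algebra.algebraMap_eq_smul_one] using
    (Matrix.isPositive_toEuclideanLin_iff.2 hle).inner_nonneg_right v

theorem inner_toEuclideanCLM_le_mul_norm_sq {P : Matrix ι ι ℝ} (hP : P.IsHermitian) {b : ℝ}
    (hb : ∀ μ ∈ spectrum ℝ P, μ ≤ b) (v : EuclideanSpace ℝ ι) :
    ⟪v, toEuclideanCLM (𝕜 := ℝ) P v⟫ ≤ b * ‖v‖ ^ 2 := by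
  have hle : (algebraMap ℝ _ b - P).PosSemidef :=
    (le_algebraMap_iff_spectrum_le hP.isSelfAdjoint).2 hb
  simpa [← coe_toEuclideanCLM_eq_toEuclideanLin, inner_sub_right, real_inner_smul_right,
    Algebra.algebraMap_eq_smul_one] using
    (Matrix.isPositive_toEuclideanLin_iff.2 hle).inner_nonneg_right v

theorem inner_toEuclideanCLM_lyapunov {F P : Matrix ι ι ℝ} (hLyap : Fᵀ * P * F - P = -1)
    (v : EuclideanSpace ℝ ι) :
    ⟪toEuclideanCLM (𝕜 := ℝ) F v, toEuclideanCLM (𝕜 := ℝ) P (toEuclideanCLM (𝕜 := ℝ) F v)⟫ =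
      ⟪v, toEuclideanCLM (𝕜 := ℝ) P v⟫ - ‖v‖ ^ 2 := by
  have hFPF : Fᵀ * P * F = P - 1 := by rw [← sub_eq_zero, ← sub_add, hLyap, neg_add_cancel]
  rw [← ContinuousLinearMap.adjoint_inner_right, ← ContinuousLinearMap.star_eq_adjoint,
    ← map_star, ← mul_apply_eq_comp, ← mul_apply_eq_comp, ← map_mul, ← map_mul,
    star_eq_conjTranspose, conjTranspose_eq_transpose_of_trivial, hFPF, map_sub, map_one,
    _root_.sub_apply, inner_sub_right, one_apply_eq_self, real_inner_self_eq_norm_sq]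

theorem inner_toEuclideanCLM_add_le_of_lyapunov {F P : Matrix ι ι ℝ} (hP : P.IsHermitian)
    (hLyap : Fᵀ * P * F - P = -1) {b : ℝ} (hb0 : 0 < b) (hb : ∀ μ ∈ spectrum ℝ P, μ ≤ b)
    (v g : EuclideanSpace ℝ ι) :
    ⟪toEuclideanCLM (𝕜 := ℝ) F v + g, toEuclideanCLM (𝕜 := ℝ) P (toEuclideanCLM (𝕜 := ℝ) F v + g)⟫ ≤
      (1 - 1 / (2 * b)) * ⟪v, toEuclideanCLM (𝕜 := ℝ) P v⟫ +
        (‖toEuclideanCLM (𝕜 := ℝ) P‖ + 2 * ‖toEuclideanCLM (𝕜 := ℝ) (P * F)‖ ^ 2) * ‖g‖ ^ 2 := by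
  have hstep := inner_add_apply_add_le_of_lyapunov (isSymmetric_toEuclideanLin_iff.2 hP)
    (inner_toEuclideanCLM_lyapunov hLyap) v g
  have hup := inner_toEuclideanCLM_le_mul_norm_sq hP hb v
  have hhalf : ⟪v, toEuclideanCLM (𝕜 := ℝ) P v⟫ / (2 * b) ≤ ‖v‖ ^ 2 / 2 := by
    rw [div_le_div_iff₀ (by positivity) two_pos]
    nlinarith
  rw [map_mul]
  linarith [show (1 - 1 / (2 * b)) * ⟪v, toEuclideanCLM (𝕜 := ℝ) P v⟫ =
    ⟪v, toEuclideanCLM (𝕜 := ℝ) P v⟫ - ⟪v, toEuclideanCLM (𝕜 := ℝ) P v⟫ / (2 * b) by ring]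

end Matrix

theorem limsup_norm_sq_bound_of_uniform_general
    (n : ℕ)
    (F P : Matrix (Fin n) (Fin n) ℝ)
    (hPpd : P.PosDef)
    (hLyap : Fᵀ * P * F - P = -(1 : Matrix (Fin n) (Fin n) ℝ))
    (lamMin lamMax lam beta : ℝ)
    (hlamMin : IsLeast (spectrum ℝ P) lamMin)
    (hlamMax : IsGreatest (spectrum ℝ P) lamMax)
    (hlam : lam = 1 - 1 / (2 * lamMax))
    (hbeta : beta = ‖Matrix.toEuclideanCLM (𝕜 := ℝ) P‖ +
      2 * ‖Matrix.toEuclideanCLM (𝕜 := ℝ) (P * F)‖ ^ 2)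
    (x G : ℕ → EuclideanSpace ℝ (Fin n))
    (hx : ∀ t, x (t + 1) = Matrix.toEuclideanCLM (𝕜 := ℝ) F (x t) + G t)
    (α₁ : ℝ) (hG : ∀ t, ‖G t‖ ≤ α₁) :
    limsup (fun t => ‖x t‖ ^ 2) atTop ≤ beta * α₁ ^ 2 / (lamMin * (1 - lam)) := by
  set V : ℕ → ℝ := fun t ↦ ⟪x t, toEuclideanCLM (𝕜 := ℝ) P (x t)⟫
  have hspec := one_le_of_mem_spectrum_of_lyapunov hPpd.posSemidef hLyap
  have hlamMax1 : 1 ≤ lamMax := hspec _ hlamMax.1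
  have hlam0 : 0 ≤ lam := by
    have : 1 / (2 * lamMax) ≤ 1 / 2 := by gcongr; linarith
    linarith
  have hlam1 : lam < 1 := by
    have : 0 < 1 / (2 * lamMax) := by positivity
    linarith
  have hrec (t : ℕ) : V (t + 1) ≤ lam * V t + beta * α₁ ^ 2 := by
    have hbeta0 : 0 ≤ beta := by rw [hbeta]; positivity
    calc V (t + 1) ≤ lam * V t + beta * ‖G t‖ ^ 2 := by
          simpa only [V, hx t, hlam, hbeta] using inner_toEuclideanCLM_add_le_of_lyapunov
            hPpd.isHermitian hLyap (by positivity) hlamMax.2 (x t) (G t)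
      _ ≤ lam * V t + beta * α₁ ^ 2 := by
          gcongr
          exact hG t
  exact limsup_le_of_mul_le_of_le_mul_add (zero_lt_one.trans_le (hspec _ hlamMin.1)) hlam0 hlam1
    (fun t ↦ sq_nonneg _) (fun t ↦ mul_norm_sq_le_inner_toEuclideanCLM hPpd.isHermitian hlamMin.2 _)
    hrec

/-- Part 1) of Lemma 3: for `x(t+1) = F x(t) + G(t)` with `FᵀPF − P = −I`,
a uniform bound `α₁` on the inputs gives
`limsup ‖x(t)‖² ≤ β α₁²/(λ_min(P)(1 − λ))`. -/
theorem limsup_norm_sq_bound_of_uniform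
    (n : ℕ) (hn : 1 ≤ n)
    (F P : Matrix (Fin n) (Fin n) ℝ)
    (hPsymm : P.IsSymm) (hPpd : P.PosDef)
    (hLyap : Fᵀ * P * F - P = -(1 : Matrix (Fin n) (Fin n) ℝ))
    (lamMin lamMax lam beta : ℝ)
    (hlamMin : IsLeast (spectrum ℝ P) lamMin)
    (hlamMax : IsGreatest (spectrum ℝ P) lamMax)
    (hlam : lam = 1 - 1 / (2 * lamMax))
    (hbeta : beta = ‖Matrix.toEuclideanCLM (𝕜 := ℝ) P‖ +
      2 * ‖Matrix.toEuclideanCLM (𝕜 := ℝ) (P * F)‖ ^ 2)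
    (x G : ℕ → EuclideanSpace ℝ (Fin n))
    (hx : ∀ t, x (t + 1) = Matrix.toEuclideanCLM (𝕜 := ℝ) F (x t) + G t)
    (α₁ : ℝ) (hα₁ : 0 ≤ α₁) (hG : ∀ t, ‖G t‖ ≤ α₁) :
    limsup (fun t => ‖x t‖ ^ 2) atTop ≤ beta * α₁ ^ 2 / (lamMin * (1 - lam)) :=
  limsup_norm_sq_bound_of_uniform_general n F P hPpd hLyap lamMin lamMax lam beta hlamMin hlamMax
    hlam hbeta x G hx α₁ hG
end

section
/- Let n ≥ 1, let F be an n×n real matrix, and let P be an n×n real symmetric positive definite matrix satisfying Fᵀ·P·F − P = −I_n. Let λ_min(P) and λ_max(P) denote the smallest and largest eigenvalues of P, set λ = 1 − 1/(2·λ_max(P)) and β = ‖P‖ + 2·‖P·F‖², where ‖·‖ is the operator norm induced by the Euclidean norm on ℝⁿ. Let x, G : ℕ → ℝⁿ satisfy x(t+1) = F·x(t) + G(t) for all t, and suppose there is α₂ ≥ 0 with limsup_{t→∞} ‖G(t)‖ ≤ α₂. Then limsup_{t→∞} ‖x(t)‖² ≤ β·α₂²/(λ_min(P)·(1 − λ)).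 -/
/-!
`V y = ⟪P y, y⟫` is a Lyapunov function: the Lyapunov equation says `V (F y) = V y - ‖y‖²`,
and since `V y ≤ λ_max ‖y‖²`, absorbing the cross term of `V (F x + G)` into `‖x‖² / 2` by
Young's inequality gives `V (x (t + 1)) ≤ λ V (x t) + β ‖G t‖²` with `λ = 1 - 1 / (2 λ_max)`,
where `0 ≤ λ < 1` because `P = I + Fᵀ P F ≥ I`.
This contraction drives `V (x t)` eventually below `β (α₂ + δ)² / (1 - λ) + δ` for every `δ > 0`,
and `λ_min ‖x‖² ≤ V x` turns this into the bound as `δ → 0`.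
-/

open Matrix

open Filter

open Topology RealInnerProductSpace

theorem eventually_le_div_one_sub_add_of_le_mul_add {v : ℕ → ℝ} {r b δ : ℝ} (hr₀ : 0 ≤ r)
    (hr₁ : r < 1) (hδ : 0 < δ) (hv : ∀ᶠ t in atTop, v (t + 1) ≤ r * v t + b) :
    ∀ᶠ t in atTop, v t ≤ b / (1 - r) + δ := by
  obtain ⟨t₀, ht₀⟩ := eventually_atTop.mp hv
  set c := b / (1 - r)
  have hfix : r * c + b = c := by
    have : 1 - r ≠ 0 := (sub_pos.2 hr₁).ne'
    simp only [c]
    field_simp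
    ring
  -- the distance to the fixed point `c` of `v ↦ r v + b` contracts by `r`
  have hcontract : ∀ t ≥ t₀, v t - c ≤ r ^ (t - t₀) * (v t₀ - c) := by
    intro t ht
    induction t, ht using Nat.le_induction with
    | base => simp
    | succ t ht ih =>
      rw [Nat.sub_add_comm ht, pow_succ', mul_assoc]
      linarith [ht₀ t ht, mul_le_mul_of_nonneg_left ih hr₀]
  have hlim : Tendsto (fun t => r ^ (t - t₀) * (v t₀ - c)) atTop (𝓝 0) := by
    simpa using ((tendsto_pow_atTop_nhds_zero_of_lt_one hr₀ hr₁).comp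
      (tendsto_sub_atTop_nat t₀)).mul_const (v t₀ - c)
  filter_upwards [eventually_ge_atTop t₀, hlim.eventually (ge_mem_nhds hδ)] with t ht hsmall
  linarith [hcontract t ht]

theorem limsup_le_of_forall_pos_eventually_le {α : Type*} {l : Filter α} {f : α → ℝ}
    {g : ℝ → ℝ} (hf : IsCoboundedUnder (· ≤ ·) l f) (hg : ContinuousWithinAt g (Set.Ioi 0) 0)
    (h : ∀ δ > 0, ∀ᶠ a in l, f a ≤ g δ) : limsup f l ≤ g 0 :=
  ge_of_tendsto hg (eventually_nhdsWithin_of_forall fun δ hδ => limsup_le_of_le hf (h δ hδ))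

theorem isBoundedUnder_norm_of_eq_add {𝕜 E : Type*} [NontriviallyNormedField 𝕜]
    [SeminormedAddCommGroup E] [NormedSpace 𝕜 E] {A : E →L[𝕜] E} {x G : ℕ → E}
    (hx : ∀ t, x (t + 1) = A (x t) + G t) (hb : IsBoundedUnder (· ≤ ·) atTop fun t => ‖x t‖) :
    IsBoundedUnder (· ≤ ·) atTop fun t => ‖G t‖ := by
  obtain ⟨C, hC⟩ := hb
  rw [eventually_map] at hC
  refine isBoundedUnder_of_eventually_le (a := C + ‖A‖ * C) ?_
  filter_upwards [hC, (tendsto_add_atTop_nat 1).eventually hC] with t ht ht'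
  calc ‖G t‖ = ‖x (t + 1) - A (x t)‖ := by rw [hx, add_sub_cancel_left]
    _ ≤ ‖x (t + 1)‖ + ‖A‖ * ‖x t‖ := (norm_sub_le _ _).trans (by gcongr; exact A.le_opNorm _)
    _ ≤ C + ‖A‖ * C := by gcongr

theorem eventually_le_of_le_mul_add_mul_sq {v u : ℕ → ℝ} {r b a δ : ℝ} (hr₀ : 0 ≤ r)
    (hr₁ : r < 1) (hb : 0 ≤ b) (hu₀ : ∀ t, 0 ≤ u t) (hub : IsBoundedUnder (· ≤ ·) atTop u)
    (hu : limsup u atTop ≤ a) (hv : ∀ t, v (t + 1) ≤ r * v t + b * u t ^ 2) (hδ : 0 < δ) :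
    ∀ᶠ t in atTop, v t ≤ b * (a + δ) ^ 2 / (1 - r) + δ := by
  apply eventually_le_div_one_sub_add_of_le_mul_add hr₀ hr₁ hδ
  filter_upwards [eventually_lt_of_limsup_lt (hu.trans_lt (lt_add_of_pos_right a hδ)) hub]
    with t ht
  calc v (t + 1) ≤ r * v t + b * u t ^ 2 := hv t
    _ ≤ r * v t + b * (a + δ) ^ 2 := by gcongr; exact hu₀ t

section Lyapunov

variable {E : Type*} [NormedAddCommGroup E] [InnerProductSpace ℝ E] {A T : E →L[ℝ] E}

theorem inner_apply_apply_of_star_mul_mul_eq [CompleteSpace E] (h : star A * T * A = T - 1)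
    (y : E) : ⟪T (A y), A y⟫ = ⟪T y, y⟫ - ‖y‖ ^ 2 := by
  calc ⟪T (A y), A y⟫ = ⟪(star A * T * A) y, y⟫ := by
        simp [ContinuousLinearMap.star_eq_adjoint, ContinuousLinearMap.adjoint_inner_left]
    _ = ⟪T y, y⟫ - ‖y‖ ^ 2 := by
        simp [h, inner_sub_left]

theorem one_le_of_apply_eq_smul
    (hdec : ∀ y, ⟪T (A y), A y⟫ = ⟪T y, y⟫ - ‖y‖ ^ 2) (hpos : ∀ y, 0 ≤ ⟪T y, y⟫)
    {μ : ℝ} {y : E} (hy : y ≠ 0) (hμ : T y = μ • y) : 1 ≤ μ := by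
  have hT : ⟪T y, y⟫ = μ * ‖y‖ ^ 2 := by
    rw [hμ, real_inner_smul_left, real_inner_self_eq_norm_sq]
  have hy2 : 0 < ‖y‖ ^ 2 := by positivity
  nlinarith [hdec y, hpos (A y)]

theorem inner_apply_add_le [CompleteSpace E] (hT : IsSelfAdjoint T)
    (hdec : ∀ y, ⟪T (A y), A y⟫ = ⟪T y, y⟫ - ‖y‖ ^ 2) {c : ℝ} (hc : 0 < c) {y : E}
    (hy : ⟪T y, y⟫ ≤ c * ‖y‖ ^ 2) (g : E) :
    ⟪T (A y + g), A y + g⟫ ≤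
      (1 - 1 / (2 * c)) * ⟪T y, y⟫ + (‖T‖ + 2 * ‖T * A‖ ^ 2) * ‖g‖ ^ 2 := by
  have hexpand : ⟪T (A y + g), A y + g⟫ = ⟪T (A y), A y⟫ + 2 * ⟪T (A y), g⟫ + ⟪T g, g⟫ := by
    have hsymm : ⟪T g, A y⟫ = ⟪T (A y), g⟫ := (hT.isSymmetric g (A y)).trans (real_inner_comm _ _)
    rw [map_add, inner_add_left, inner_add_right, inner_add_right, hsymm]
    ring
  have hcross : ⟪T (A y), g⟫ ≤ ‖T * A‖ * ‖y‖ * ‖g‖ :=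
    (real_inner_le_norm _ _).trans
      (mul_le_mul_of_nonneg_right ((T * A).le_opNorm y) (norm_nonneg g))
  have hinput : ⟪T g, g⟫ ≤ ‖T‖ * ‖g‖ ^ 2 := by
    calc ⟪T g, g⟫ ≤ ‖T g‖ * ‖g‖ := real_inner_le_norm _ _
      _ ≤ ‖T‖ * ‖g‖ * ‖g‖ := mul_le_mul_of_nonneg_right (T.le_opNorm g) (norm_nonneg g)
      _ = ‖T‖ * ‖g‖ ^ 2 := by ring
  have hyoung : 2 * (‖T * A‖ * ‖y‖ * ‖g‖) ≤ ‖y‖ ^ 2 / 2 + 2 * ‖T * A‖ ^ 2 * ‖g‖ ^ 2 := by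
    nlinarith [sq_nonneg (‖y‖ - 2 * ‖T * A‖ * ‖g‖)]
  have hdecay : ⟪T y, y⟫ / (2 * c) ≤ ‖y‖ ^ 2 / 2 := by
    rw [div_le_iff₀ (by positivity)]
    nlinarith
  rw [hexpand, hdec, one_sub_mul, one_div_mul_eq_div]
  linarith

theorem limsup_norm_sq_le_of_inner_apply_apply_eq [CompleteSpace E] (hT : IsSelfAdjoint T)
    (hdec : ∀ y, ⟪T (A y), A y⟫ = ⟪T y, y⟫ - ‖y‖ ^ 2) {m M : ℝ} (hm : 0 < m) (hM : 1 / 2 ≤ M)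
    (hlow : ∀ y, m * ‖y‖ ^ 2 ≤ ⟪T y, y⟫) (hup : ∀ y, ⟪T y, y⟫ ≤ M * ‖y‖ ^ 2) {x G : ℕ → E}
    (hx : ∀ t, x (t + 1) = A (x t) + G t) {a : ℝ} (hG : limsup (fun t => ‖G t‖) atTop ≤ a) :
    limsup (fun t => ‖x t‖ ^ 2) atTop ≤ 2 * M * (‖T‖ + 2 * ‖T * A‖ ^ 2) * a ^ 2 / m := by
  set r := 1 - 1 / (2 * M)
  set β := ‖T‖ + 2 * ‖T * A‖ ^ 2
  have hr₀ : 0 ≤ r := by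
    rw [sub_nonneg, div_le_one (by positivity)]; linarith
  have hr₁ : r < 1 := by
    rw [sub_lt_self_iff]; positivity
  have hstep : ∀ t, ⟪T (x (t + 1)), x (t + 1)⟫ ≤ r * ⟪T (x t), x t⟫ + β * ‖G t‖ ^ 2 := fun t =>
    hx t ▸ inner_apply_add_le hT hdec (by positivity) (hup _) _
  by_cases hxb : IsBoundedUnder (· ≤ ·) atTop fun t => ‖x t‖ ^ 2
  swap
  · -- junk value: in `ℝ` the `limsup` of a sequence that is unbounded above is `0`
    rw [Real.limsup_of_not_isBoundedUnder hxb]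
    positivity
  have hGb := isBoundedUnder_norm_of_eq_add hx <| by
    obtain ⟨C, hC⟩ := hxb
    exact isBoundedUnder_of_eventually_le
      ((eventually_map.1 hC).mono fun t => Real.le_sqrt_of_sq_le)
  refine (limsup_le_of_forall_pos_eventually_le (g := fun δ => (β * (a + δ) ^ 2 / (1 - r) + δ) / m)
    (isCoboundedUnder_le_of_le atTop fun t => sq_nonneg ‖x t‖) ?_ fun δ hδ => ?_).trans_eq ?_
  · exact (by fun_prop : Continuous _).continuousWithinAt
  · filter_upwards [eventually_le_of_le_mul_add_mul_sq hr₀ hr₁ (by positivity)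
      (fun t => norm_nonneg _) hGb hG (v := fun t => ⟪T (x t), x t⟫) hstep hδ] with t ht
    rw [le_div_iff₀ hm]
    linarith [hlow (x t)]
  · simp only [r, add_zero, sub_sub_cancel]
    field_simp

end Lyapunov

namespace Matrix

variable {ι : Type*} [Fintype ι] [DecidableEq ι] {A : Matrix ι ι ℝ}

theorem PosDef.pos_of_mem_spectrum_s13 (hA : A.PosDef) {μ : ℝ} (hμ : μ ∈ spectrum ℝ A) : 0 < μ := by
  rw [hA.isHermitian.spectrum_real_eq_range_eigenvalues] at hμ
  obtain ⟨i, rfl⟩ := hμ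
  exact hA.eigenvalues_pos i

namespace IsHermitian

theorem isSelfAdjoint_toEuclideanCLM (hA : A.IsHermitian) :
    IsSelfAdjoint (toEuclideanCLM (𝕜 := ℝ) A) :=
  hA.isSelfAdjoint.map _

theorem toEuclideanCLM_eigenvectorBasis (hA : A.IsHermitian) (i : ι) :
    toEuclideanCLM (𝕜 := ℝ) A (hA.eigenvectorBasis i) =
      hA.eigenvalues i • hA.eigenvectorBasis i := by
  ext j
  exact congrFun (hA.mulVec_eigenvectorBasis i) j

theorem inner_toEuclideanCLM_self (hA : A.IsHermitian) (y : EuclideanSpace ℝ ι) :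
    ⟪toEuclideanCLM (𝕜 := ℝ) A y, y⟫ =
      ∑ i, hA.eigenvalues i * ⟪hA.eigenvectorBasis i, y⟫ ^ 2 := by
  rw [← hA.eigenvectorBasis.sum_inner_mul_inner]
  refine Finset.sum_congr rfl fun i _ => ?_
  rw [show ⟪toEuclideanCLM (𝕜 := ℝ) A y, _⟫ = ⟪y, _⟫ from
      hA.isSelfAdjoint_toEuclideanCLM.isSymmetric y (hA.eigenvectorBasis i),
    ContinuousLinearMap.coe_coe, hA.toEuclideanCLM_eigenvectorBasis, real_inner_smul_right,
    real_inner_comm y]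
  ring

theorem mul_norm_sq_le_inner_toEuclideanCLM_self (hA : A.IsHermitian) {c : ℝ}
    (hc : c ∈ lowerBounds (spectrum ℝ A)) (y : EuclideanSpace ℝ ι) :
    c * ‖y‖ ^ 2 ≤ ⟪toEuclideanCLM (𝕜 := ℝ) A y, y⟫ := by
  rw [hA.inner_toEuclideanCLM_self, ← hA.eigenvectorBasis.sum_sq_inner_right, Finset.mul_sum]
  gcongr with i
  exact hc (hA.eigenvalues_mem_spectrum_real i)

theorem inner_toEuclideanCLM_self_le_mul_norm_sq (hA : A.IsHermitian) {c : ℝ}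
    (hc : c ∈ upperBounds (spectrum ℝ A)) (y : EuclideanSpace ℝ ι) :
    ⟪toEuclideanCLM (𝕜 := ℝ) A y, y⟫ ≤ c * ‖y‖ ^ 2 := by
  rw [hA.inner_toEuclideanCLM_self, ← hA.eigenvectorBasis.sum_sq_inner_right, Finset.mul_sum]
  gcongr with i
  exact hc (hA.eigenvalues_mem_spectrum_real i)

end IsHermitian

theorem inner_toEuclideanCLM_apply_of_lyapunov_eq {F P : Matrix ι ι ℝ}
    (h : Fᵀ * P * F - P = -1) (y : EuclideanSpace ℝ ι) :
    ⟪toEuclideanCLM (𝕜 := ℝ) P (toEuclideanCLM (𝕜 := ℝ) F y), toEuclideanCLM (𝕜 := ℝ) F y⟫ =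
      ⟪toEuclideanCLM (𝕜 := ℝ) P y, y⟫ - ‖y‖ ^ 2 := by
  refine inner_apply_apply_of_star_mul_mul_eq ?_ y
  rw [← map_star, ← map_mul, ← map_mul, star_eq_conjTranspose,
    conjTranspose_eq_transpose_of_trivial, sub_eq_iff_eq_add.mp h, neg_add_eq_sub, map_sub,
    map_one]

theorem PosDef.one_le_of_mem_spectrum_of_lyapunov_eq {F P : Matrix ι ι ℝ} (hP : P.PosDef)
    (h : Fᵀ * P * F - P = -1) {μ : ℝ} (hμ : μ ∈ spectrum ℝ P) : 1 ≤ μ := by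
  obtain ⟨i, rfl⟩ := hP.isHermitian.spectrum_real_eq_range_eigenvalues ▸ hμ
  refine one_le_of_apply_eq_smul (inner_toEuclideanCLM_apply_of_lyapunov_eq h)
    (fun y => ?_) (hP.isHermitian.eigenvectorBasis.orthonormal.ne_zero i)
    (hP.isHermitian.toEuclideanCLM_eigenvectorBasis i)
  simpa using hP.isHermitian.mul_norm_sq_le_inner_toEuclideanCLM_self
    (fun _ hν => (hP.pos_of_mem_spectrum_s13 hν).le) y

end Matrix

theorem limsup_norm_sq_bound_of_limsup_general
    (n : ℕ)
    (F P : Matrix (Fin n) (Fin n) ℝ)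
    (hPpd : P.PosDef)
    (hLyap : Fᵀ * P * F - P = -(1 : Matrix (Fin n) (Fin n) ℝ))
    (lamMin lamMax lam beta : ℝ)
    (hlamMin : IsLeast (spectrum ℝ P) lamMin)
    (hlamMax : IsGreatest (spectrum ℝ P) lamMax)
    (hlam : lam = 1 - 1 / (2 * lamMax))
    (hbeta : beta = ‖Matrix.toEuclideanCLM (𝕜 := ℝ) P‖ +
      2 * ‖Matrix.toEuclideanCLM (𝕜 := ℝ) (P * F)‖ ^ 2)
    (x G : ℕ → EuclideanSpace ℝ (Fin n))
    (hx : ∀ t, x (t + 1) = Matrix.toEuclideanCLM (𝕜 := ℝ) F (x t) + G t)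
    (α₂ : ℝ) (hG : limsup (fun t => ‖G t‖) atTop ≤ α₂) :
    limsup (fun t => ‖x t‖ ^ 2) atTop ≤ beta * α₂ ^ 2 / (lamMin * (1 - lam)) := by
  have hP := hPpd.isHermitian
  have hmax : 1 ≤ lamMax := hPpd.one_le_of_mem_spectrum_of_lyapunov_eq hLyap hlamMax.1
  calc limsup (fun t => ‖x t‖ ^ 2) atTop ≤ 2 * lamMax * beta * α₂ ^ 2 / lamMin := by
        rw [hbeta, map_mul]
        exact limsup_norm_sq_le_of_inner_apply_apply_eq hP.isSelfAdjoint_toEuclideanCLM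
          (inner_toEuclideanCLM_apply_of_lyapunov_eq hLyap)
          (hPpd.pos_of_mem_spectrum_s13 hlamMin.1) (by linarith)
          (hP.mul_norm_sq_le_inner_toEuclideanCLM_self hlamMin.2)
          (hP.inner_toEuclideanCLM_self_le_mul_norm_sq hlamMax.2) hx hG
    _ = beta * α₂ ^ 2 / (lamMin * (1 - lam)) := by
        rw [hlam, sub_sub_cancel]
        field_simp

/-- Part 2) of Lemma 3: for `x(t+1) = F x(t) + G(t)` with `FᵀPF − P = −I`,
an asymptotic bound `α₂` on the inputs gives
`limsup ‖x(t)‖² ≤ β α₂²/(λ_min(P)(1 − λ))`. -/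
theorem limsup_norm_sq_bound_of_limsup
    (n : ℕ) (hn : 1 ≤ n)
    (F P : Matrix (Fin n) (Fin n) ℝ)
    (hPsymm : P.IsSymm) (hPpd : P.PosDef)
    (hLyap : Fᵀ * P * F - P = -(1 : Matrix (Fin n) (Fin n) ℝ))
    (lamMin lamMax lam beta : ℝ)
    (hlamMin : IsLeast (spectrum ℝ P) lamMin)
    (hlamMax : IsGreatest (spectrum ℝ P) lamMax)
    (hlam : lam = 1 - 1 / (2 * lamMax))
    (hbeta : beta = ‖Matrix.toEuclideanCLM (𝕜 := ℝ) P‖ +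
      2 * ‖Matrix.toEuclideanCLM (𝕜 := ℝ) (P * F)‖ ^ 2)
    (x G : ℕ → EuclideanSpace ℝ (Fin n))
    (hx : ∀ t, x (t + 1) = Matrix.toEuclideanCLM (𝕜 := ℝ) F (x t) + G t)
    (α₂ : ℝ) (hα₂ : 0 ≤ α₂) (hG : limsup (fun t => ‖G t‖) atTop ≤ α₂) :
    limsup (fun t => ‖x t‖ ^ 2) atTop ≤ beta * α₂ ^ 2 / (lamMin * (1 - lam)) :=
  limsup_norm_sq_bound_of_limsup_general n F P hPpd hLyap lamMin lamMax lam beta hlamMin hlamMax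
    hlam hbeta x G hx α₂ hG
end
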